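/- Under the hypotheses above, the random variable Y_ρ = ‖(1/m)∑_i U_i ρ U_i† − I/d‖₁ satisfies E[Y_ρ] ≤ sqrt(d/m). -/

import Mathlib

open Matrix MeasureTheory ProbabilityTheory ComplexOrder

/-- The trace norm (sum of singular values) of a complex square matrix. -/
noncomputable def traceNorm {n : Type*} [Fintype n] [DecidableEq n] (M : Matrix n n ℂ) : ℝ :=
  ((Matrix.posSemidef_conjTranspose_mul_self M).1.eigenvectorUnitary.1 *
    diagonal (((↑) : ℝ → ℂ) ∘ Real.sqrt ∘ (Matrix.posSemidef_conjTranspose_mul_self M).1.eigenvalues) *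
    (star (Matrix.posSemidef_conjTranspose_mul_self M).1.eigenvectorUnitary : Matrix n n ℂ)).trace.re

/-- The Borel-measurable structure on complex matrices, entrywise. -/
noncomputable instance matrixMeasurableSpace (d : ℕ) : MeasurableSpace (Matrix (Fin d) (Fin d) ℂ) := by
  unfold Matrix; infer_instance

/-! The trace norm is at most `√d` times the Frobenius norm (Cauchy–Schwarz on the singular
values), and `𝔼 √F ≤ √(𝔼 F)` by Jensen, so it suffices to show `𝔼 ‖X‖_F² ≤ 1/m` for
`X = (1/m) ∑ᵢ (Uᵢ ρ Uᵢ† - I/d)`. Entrywise the summands are independent with mean `I/d`, so the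
second moment of their sum is the sum of their variances, each at most the second moment
`‖Uᵢ ρ Uᵢ†‖_F² = 1` of a pure state. -/

noncomputable def frobeniusNormSq {n : Type*} [Fintype n] (M : Matrix n n ℂ) : ℝ :=
  ∑ j, ∑ k, Complex.normSq (M j k)

section Frobenius

variable {n : Type*} [Fintype n]

lemma frobeniusNormSq_nonneg (M : Matrix n n ℂ) : 0 ≤ frobeniusNormSq M :=
  Finset.sum_nonneg fun _ _ => Finset.sum_nonneg fun _ _ => Complex.normSq_nonneg _

lemma normSq_apply_le_frobeniusNormSq (M : Matrix n n ℂ) (j k : n) :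
    Complex.normSq (M j k) ≤ frobeniusNormSq M :=
  calc Complex.normSq (M j k) ≤ ∑ k', Complex.normSq (M j k') :=
        Finset.single_le_sum (fun _ _ => Complex.normSq_nonneg _) (Finset.mem_univ k)
    _ ≤ frobeniusNormSq M :=
        Finset.single_le_sum (f := fun j => ∑ k', Complex.normSq (M j k'))
          (fun _ _ => Finset.sum_nonneg fun _ _ => Complex.normSq_nonneg _) (Finset.mem_univ j)

lemma frobeniusNormSq_smul (c : ℂ) (M : Matrix n n ℂ) :
    frobeniusNormSq (c • M) = Complex.normSq c * frobeniusNormSq M := by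
  simp only [frobeniusNormSq, Matrix.smul_apply, smul_eq_mul, Complex.normSq_mul, Finset.mul_sum]

lemma re_trace_conjTranspose_mul_self (M : Matrix n n ℂ) :
    (Mᴴ * M).trace.re = frobeniusNormSq M := by
  simp only [frobeniusNormSq, trace, diag, mul_apply, conjTranspose_apply, Complex.re_sum,
    Complex.star_def, ← Complex.normSq_eq_conj_mul_self, Complex.ofReal_re]
  exact Finset.sum_comm

lemma star_dotProduct_self_eq_sum_normSq (v : n → ℂ) :
    star v ⬝ᵥ v = ((∑ i, Complex.normSq (v i) : ℝ) : ℂ) := by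
  simp [dotProduct, Complex.normSq_eq_conj_mul_self]

lemma sum_normSq_mulVec_of_unitary [DecidableEq n] {U : Matrix n n ℂ} (hU : Uᴴ * U = 1)
    (v : n → ℂ) :
    ∑ i, Complex.normSq ((U *ᵥ v) i) = ∑ i, Complex.normSq (v i) := by
  have h : star (U *ᵥ v) ⬝ᵥ (U *ᵥ v) = star v ⬝ᵥ v := by
    rw [star_mulVec, dotProduct_mulVec, vecMul_vecMul, hU, vecMul_one]
  simpa only [star_dotProduct_self_eq_sum_normSq, Complex.ofReal_inj] using h

lemma trace_vecMulVec_star (v : n → ℂ) :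
    (vecMulVec v (star v)).trace = ((∑ i, Complex.normSq (v i) : ℝ) : ℂ) := by
  rw [trace_vecMulVec, dotProduct_comm, star_dotProduct_self_eq_sum_normSq]

lemma frobeniusNormSq_vecMulVec_star (w : n → ℂ) :
    frobeniusNormSq (vecMulVec w (star w)) = (∑ i, Complex.normSq (w i)) ^ 2 := by
  simp only [frobeniusNormSq, vecMulVec_apply, Pi.star_apply, Complex.star_def,
    Complex.normSq_mul, Complex.normSq_conj, sq, Finset.sum_mul_sum]

lemma frobeniusNormSq_conj_pure_state [DecidableEq n] {U : Matrix n n ℂ} (hU : Uᴴ * U = 1)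
    {v : n → ℂ} (hv : ∑ i, Complex.normSq (v i) = 1) :
    frobeniusNormSq (U * vecMulVec v (star v) * Uᴴ) = 1 := by
  rw [mul_vecMulVec, vecMulVec_mul, ← star_mulVec, frobeniusNormSq_vecMulVec_star,
    sum_normSq_mulVec_of_unitary hU, hv, one_pow]

end Frobenius

section TraceNorm

variable {n : Type*} [Fintype n] [DecidableEq n]

lemma traceNorm_eq_sum_sqrt_eigenvalues (M : Matrix n n ℂ) :
    traceNorm M = ∑ i, √((posSemidef_conjTranspose_mul_self M).1.eigenvalues i) := by
  rw [traceNorm, trace_mul_cycle, Unitary.coe_star_mul_self, one_mul, trace_diagonal]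
  simp

lemma sum_eigenvalues_conjTranspose_mul_self (M : Matrix n n ℂ) :
    ∑ i, (posSemidef_conjTranspose_mul_self M).1.eigenvalues i = frobeniusNormSq M := by
  rw [← re_trace_conjTranspose_mul_self,
    (posSemidef_conjTranspose_mul_self M).1.trace_eq_sum_eigenvalues]
  simp

lemma traceNorm_nonneg (M : Matrix n n ℂ) : 0 ≤ traceNorm M := by
  rw [traceNorm_eq_sum_sqrt_eigenvalues]
  positivity

lemma traceNorm_le_sqrt_card_mul_frobeniusNormSq (M : Matrix n n ℂ) :
    traceNorm M ≤ √(Fintype.card n * frobeniusNormSq M) := by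
  have hP := posSemidef_conjTranspose_mul_self M
  rw [traceNorm_eq_sum_sqrt_eigenvalues, ← sum_eigenvalues_conjTranspose_mul_self]
  refine Real.le_sqrt_of_sq_le ?_
  calc (∑ i, √(hP.1.eigenvalues i)) ^ 2 ≤ Fintype.card n * ∑ i, √(hP.1.eigenvalues i) ^ 2 :=
        sq_sum_le_card_mul_sum_sq
    _ = Fintype.card n * ∑ i, hP.1.eigenvalues i := by
        simp only [Real.sq_sqrt (hP.eigenvalues_nonneg _)]

end TraceNorm

section Probability

variable {Ω : Type*} [MeasurableSpace Ω] {μ : Measure Ω}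

lemma MeasureTheory.Integrable.sqrt [IsFiniteMeasure μ] {g : Ω → ℝ} (hg : Integrable g μ)
    (hg0 : 0 ≤ᵐ[μ] g) : Integrable (fun ω => √(g ω)) μ := by
  refine (hg.add (integrable_const 1)).mono' (Real.continuous_sqrt.comp_aestronglyMeasurable
    hg.aestronglyMeasurable) (hg0.mono fun ω (hω : 0 ≤ g ω) => ?_)
  rw [Real.norm_of_nonneg (Real.sqrt_nonneg _)]
  show √(g ω) ≤ g ω + 1
  nlinarith [Real.sq_sqrt hω, Real.sqrt_nonneg (g ω)]

lemma integral_sqrt_le_sqrt_integral [IsProbabilityMeasure μ] {g : Ω → ℝ}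
    (hg : Integrable g μ) (hg0 : 0 ≤ᵐ[μ] g) : ∫ ω, √(g ω) ∂μ ≤ √(∫ ω, g ω ∂μ) :=
  Real.strictConcaveOn_sqrt.concaveOn.le_map_integral Real.continuous_sqrt.continuousOn
    isClosed_Ici hg0 hg (hg.sqrt hg0)

lemma integral_sq_sum_sub_integral_le [IsProbabilityMeasure μ] {ι : Type*} [Fintype ι]
    {X : ι → Ω → ℝ} (hX : ∀ i, MemLp (X i) 2 μ)
    (hind : Pairwise fun i j => IndepFun (X i) (X j) μ) :
    ∫ ω, (∑ i, (X i ω - μ[X i])) ^ 2 ∂μ ≤ ∑ i, ∫ ω, X i ω ^ 2 ∂μ := by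
  have hvar : Var[∑ i, X i; μ] = ∫ ω, (∑ i, (X i ω - μ[X i])) ^ 2 ∂μ := by
    rw [variance_eq_integral (Finset.aemeasurable_sum _ fun i _ => (hX i).aemeasurable)]
    simp only [Finset.sum_apply]
    rw [integral_finsetSum _ fun i _ => (hX i).integrable one_le_two]
    simp only [Finset.sum_sub_distrib]
  rw [← hvar, IndepFun.variance_sum (fun i _ => hX i) fun i _ j _ hij => hind hij]
  exact Finset.sum_le_sum fun i _ => variance_le_expectation_sq (hX i).aestronglyMeasurable

lemma MeasureTheory.MemLp.integrable_normSq {f : Ω → ℂ} (hf : MemLp f 2 μ) :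
    Integrable (fun ω => Complex.normSq (f ω)) μ :=
  (hf.re.integrable_sq.add hf.im.integrable_sq).congr
    (ae_of_all _ fun ω => by simp [Complex.normSq_apply, sq])

lemma integral_normSq_sum_sub_integral_le [IsProbabilityMeasure μ] {ι : Type*} [Fintype ι]
    {Z : ι → Ω → ℂ} (hZ : ∀ i, MemLp (Z i) 2 μ)
    (hind : Pairwise fun i j => IndepFun (Z i) (Z j) μ) :
    ∫ ω, Complex.normSq (∑ i, (Z i ω - μ[Z i])) ∂μ ≤ ∑ i, ∫ ω, Complex.normSq (Z i ω) ∂μ := by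
  have hZre : ∀ i, MemLp (fun ω => (Z i ω).re) 2 μ := fun i => (hZ i).re
  have hZim : ∀ i, MemLp (fun ω => (Z i ω).im) 2 μ := fun i => (hZ i).im
  have hre := integral_sq_sum_sub_integral_le hZre
    fun i j hij => (hind hij).comp Complex.measurable_re Complex.measurable_re
  have him := integral_sq_sum_sub_integral_le hZim
    fun i j hij => (hind hij).comp Complex.measurable_im Complex.measurable_im
  have hre_int : ∀ i, ∫ ω, (Z i ω).re ∂μ = (μ[Z i]).re :=
    fun i => integral_re ((hZ i).integrable one_le_two)
  have him_int : ∀ i, ∫ ω, (Z i ω).im ∂μ = (μ[Z i]).im :=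
    fun i => integral_im ((hZ i).integrable one_le_two)
  simp only [hre_int, him_int] at hre him
  have hsplit : ∀ ω, Complex.normSq (∑ i, (Z i ω - μ[Z i]))
      = (∑ i, ((Z i ω).re - (μ[Z i]).re)) ^ 2 + (∑ i, ((Z i ω).im - (μ[Z i]).im)) ^ 2 := by
    intro ω
    simp only [Complex.normSq_apply, ← sq, Complex.re_sum, Complex.im_sum, Complex.sub_re,
      Complex.sub_im]
  have hsum : ∀ i, ∫ ω, Complex.normSq (Z i ω) ∂μ
      = ∫ ω, (Z i ω).re ^ 2 ∂μ + ∫ ω, (Z i ω).im ^ 2 ∂μ := by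
    intro i
    rw [← integral_add (hZre i).integrable_sq (hZim i).integrable_sq]
    simp only [Complex.normSq_apply, sq]
  have hre_sum : MemLp (fun ω => ∑ i, ((Z i ω).re - (μ[Z i]).re)) 2 μ :=
    memLp_finsetSum _ fun i _ => (hZre i).sub (memLp_const _)
  have him_sum : MemLp (fun ω => ∑ i, ((Z i ω).im - (μ[Z i]).im)) 2 μ :=
    memLp_finsetSum _ fun i _ => (hZim i).sub (memLp_const _)
  simp only [hsplit, hsum, Finset.sum_add_distrib]
  rw [integral_add hre_sum.integrable_sq him_sum.integrable_sq]
  exact add_le_add hre him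

end Probability

section RandomMatrix

variable {Ω : Type*} [MeasurableSpace Ω] {μ : Measure Ω} {n : Type*} [Fintype n]

lemma integrable_frobeniusNormSq {M : Ω → Matrix n n ℂ}
    (hM : ∀ j k, MemLp (fun ω => M ω j k) 2 μ) :
    Integrable (fun ω => frobeniusNormSq (M ω)) μ :=
  integrable_finsetSum _ fun j _ => integrable_finsetSum _ fun k _ => (hM j k).integrable_normSq

lemma integral_frobeniusNormSq_eq_sum (M : Ω → Matrix n n ℂ)
    (hM : ∀ j k, MemLp (fun ω => M ω j k) 2 μ) :
    ∫ ω, frobeniusNormSq (M ω) ∂μ = ∑ j, ∑ k, ∫ ω, Complex.normSq (M ω j k) ∂μ := by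
  simp only [frobeniusNormSq]
  rw [integral_finsetSum _ fun j _ => integrable_finsetSum _ fun k _ => (hM j k).integrable_normSq]
  exact Finset.sum_congr rfl fun j _ => integral_finsetSum _ fun k _ => (hM j k).integrable_normSq

lemma integral_frobeniusNormSq_sum_sub_le [IsProbabilityMeasure μ] {ι : Type*} [Fintype ι]
    {A : ι → Ω → Matrix n n ℂ} {M : Matrix n n ℂ}
    (hA : ∀ i j k, MemLp (fun ω => A i ω j k) 2 μ)
    (hmean : ∀ i j k, ∫ ω, A i ω j k ∂μ = M j k)
    (hind : ∀ j k, Pairwise fun i i' => IndepFun (fun ω => A i ω j k) (fun ω => A i' ω j k) μ) :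
    ∫ ω, frobeniusNormSq (∑ i, (A i ω - M)) ∂μ ≤ ∑ i, ∫ ω, frobeniusNormSq (A i ω) ∂μ := by
  have hentry : ∀ ω j k, (∑ i, (A i ω - M)) j k = ∑ i, (A i ω j k - μ[fun ω => A i ω j k]) := by
    simp [Matrix.sum_apply, hmean]
  have hsum : ∀ j k, MemLp (fun ω => (∑ i, (A i ω - M)) j k) 2 μ := by
    simp only [hentry]
    exact fun j k => memLp_finsetSum _ fun i _ => (hA i j k).sub (memLp_const _)
  calc ∫ ω, frobeniusNormSq (∑ i, (A i ω - M)) ∂μ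
      = ∑ j, ∑ k, ∫ ω, Complex.normSq (∑ i, (A i ω j k - μ[fun ω => A i ω j k])) ∂μ := by
        simp only [integral_frobeniusNormSq_eq_sum _ hsum, hentry]
    _ ≤ ∑ j, ∑ k, ∑ i, ∫ ω, Complex.normSq (A i ω j k) ∂μ := by
        gcongr with j _ k _
        exact integral_normSq_sum_sub_integral_le (fun i => hA i j k) (hind j k)
    _ = ∑ i, ∑ j, ∑ k, ∫ ω, Complex.normSq (A i ω j k) ∂μ :=
        (Finset.sum_congr rfl fun _ _ => Finset.sum_comm).trans Finset.sum_comm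
    _ = ∑ i, ∫ ω, frobeniusNormSq (A i ω) ∂μ := by
        simp only [integral_frobeniusNormSq_eq_sum _ (hA _)]

lemma integral_frobeniusNormSq_average_sub_le [IsProbabilityMeasure μ] {ι : Type*} [Fintype ι]
    [Nonempty ι]    {A : ι → Ω → Matrix n n ℂ} {M : Matrix n n ℂ}
    (hA : ∀ i j k, MemLp (fun ω => A i ω j k) 2 μ)
    (hmean : ∀ i j k, ∫ ω, A i ω j k ∂μ = M j k)
    (hind : ∀ j k, Pairwise fun i i' => IndepFun (fun ω => A i ω j k) (fun ω => A i' ω j k) μ)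
    (hA_le : ∀ i ω, frobeniusNormSq (A i ω) ≤ 1) :
    ∫ ω, frobeniusNormSq ((Fintype.card ι : ℂ)⁻¹ • ∑ i, A i ω - M) ∂μ
      ≤ (Fintype.card ι : ℝ)⁻¹ := by
  have hcard : (Fintype.card ι : ℂ) ≠ 0 := Nat.cast_ne_zero.2 Fintype.card_ne_zero
  have hcenter : ∀ ω, (Fintype.card ι : ℂ)⁻¹ • ∑ i, A i ω - M
      = (Fintype.card ι : ℂ)⁻¹ • ∑ i, (A i ω - M) := fun ω => by
    rw [Finset.sum_sub_distrib, smul_sub, Finset.sum_const, Finset.card_univ,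
      ← Nat.cast_smul_eq_nsmul ℂ, smul_smul, inv_mul_cancel₀ hcard, one_smul]
  have hnormSq : Complex.normSq (Fintype.card ι : ℂ)⁻¹ = ((Fintype.card ι : ℝ)⁻¹) ^ 2 := by
    rw [map_inv₀, Complex.normSq_natCast, inv_pow, sq]
  have hA_int : ∀ i, ∫ ω, frobeniusNormSq (A i ω) ∂μ ≤ 1 := fun i =>
    (integral_mono (integrable_frobeniusNormSq (hA i)) (integrable_const 1) (hA_le i)).trans_eq
      (by simp)
  simp only [hcenter, frobeniusNormSq_smul, integral_const_mul, hnormSq]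
  calc ((Fintype.card ι : ℝ)⁻¹) ^ 2 * ∫ ω, frobeniusNormSq (∑ i, (A i ω - M)) ∂μ
      ≤ ((Fintype.card ι : ℝ)⁻¹) ^ 2 * ∑ _i : ι, (1 : ℝ) := by
        gcongr
        exact (integral_frobeniusNormSq_sum_sub_le hA hmean hind).trans
          (Finset.sum_le_sum fun i _ => hA_int i)
    _ = (Fintype.card ι : ℝ)⁻¹ := by
        rw [Finset.sum_const, Finset.card_univ, nsmul_one]
        field_simp

lemma integral_traceNorm_le_sqrt [IsProbabilityMeasure μ] [DecidableEq n]
    {M : Ω → Matrix n n ℂ}    (hM : ∀ j k, MemLp (fun ω => M ω j k) 2 μ) :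
    ∫ ω, traceNorm (M ω) ∂μ ≤ √(Fintype.card n * ∫ ω, frobeniusNormSq (M ω) ∂μ) := by
  have hF := (integrable_frobeniusNormSq hM).const_mul (Fintype.card n : ℝ)
  have hF0 : 0 ≤ᵐ[μ] fun ω => Fintype.card n * frobeniusNormSq (M ω) :=
    ae_of_all _ fun ω => mul_nonneg (Nat.cast_nonneg _) (frobeniusNormSq_nonneg _)
  calc ∫ ω, traceNorm (M ω) ∂μ ≤ ∫ ω, √(Fintype.card n * frobeniusNormSq (M ω)) ∂μ :=
        integral_mono_of_nonneg (ae_of_all _ fun ω => traceNorm_nonneg _) (hF.sqrt hF0)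
          (ae_of_all _ fun ω => traceNorm_le_sqrt_card_mul_frobeniusNormSq _)
    _ ≤ √(∫ ω, Fintype.card n * frobeniusNormSq (M ω) ∂μ) := integral_sqrt_le_sqrt_integral hF hF0
    _ = √(Fintype.card n * ∫ ω, frobeniusNormSq (M ω) ∂μ) := by rw [integral_const_mul]

lemma measurable_mul_mul_conjTranspose_apply {d : ℕ} (ρ : Matrix (Fin d) (Fin d) ℂ)
    (j k : Fin d) : Measurable fun M : Matrix (Fin d) (Fin d) ℂ => (M * ρ * Mᴴ) j k := by
  simp only [mul_apply, conjTranspose_apply]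
  fun_prop

lemma memLp_conj_pure_state_apply [IsFiniteMeasure μ] {d : ℕ} {U : Ω → Matrix (Fin d) (Fin d) ℂ}
    (hU : Measurable U) (hunit : ∀ ω, (U ω)ᴴ * U ω = 1) {v : Fin d → ℂ}
    (hv : ∑ i, Complex.normSq (v i) = 1) (j k : Fin d) :
    MemLp (fun ω => (U ω * vecMulVec v (star v) * (U ω)ᴴ) j k) 2 μ :=
  MemLp.of_bound ((measurable_mul_mul_conjTranspose_apply _ j k).comp hU).aestronglyMeasurable 1 <|
    ae_of_all _ fun ω => (sq_le_one_iff₀ (norm_nonneg _)).1 <| by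
      rw [Complex.sq_norm, ← frobeniusNormSq_conj_pure_state (hunit ω) hv]
      exact normSq_apply_le_frobeniusNormSq _ j k

end RandomMatrix

theorem expected_trace_dist_le_sqrt_general (d m : ℕ) (hm : 0 < m)
    {Ω : Type*} [MeasurableSpace Ω] (μ : Measure Ω) [IsProbabilityMeasure μ]
    (U : Fin m → Ω → Matrix (Fin d) (Fin d) ℂ)
    (hmeas : ∀ i, Measurable (U i))
    (hunit : ∀ i ω, (U i ω)ᴴ * U i ω = 1 ∧ U i ω * (U i ω)ᴴ = 1)
    (hindep : iIndepFun U μ)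
    (hrand : ∀ i (σ : Matrix (Fin d) (Fin d) ℂ), σ.PosSemidef → σ.trace = 1 →
      ∀ j k, ∫ ω, (U i ω * σ * (U i ω)ᴴ) j k ∂μ = (((d : ℂ)⁻¹ • 1 : Matrix (Fin d) (Fin d) ℂ)) j k)
    (v : Fin d → ℂ) (hv : ∑ i, Complex.normSq (v i) = 1) :
    ∫ ω, traceNorm ((m : ℂ)⁻¹ • (∑ i, U i ω * vecMulVec v (star v) * (U i ω)ᴴ)
          - (d : ℂ)⁻¹ • 1) ∂μ
      ≤ Real.sqrt ((d : ℝ) / m) := by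
  set ρ := vecMulVec v (star v)
  set c : Matrix (Fin d) (Fin d) ℂ := (d : ℂ)⁻¹ • 1
  set A : Fin m → Ω → Matrix (Fin d) (Fin d) ℂ := fun i ω => U i ω * ρ * (U i ω)ᴴ
  have hA_memLp : ∀ i j k, MemLp (fun ω => A i ω j k) 2 μ := fun i =>
    memLp_conj_pure_state_apply (hmeas i) (fun ω => (hunit i ω).1) hv
  have hX_memLp : ∀ j k, MemLp (fun ω => ((m : ℂ)⁻¹ • ∑ i, A i ω - c) j k) 2 μ := fun j k => by
    simp only [Matrix.sub_apply, Matrix.smul_apply, Matrix.sum_apply, smul_eq_mul]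
    exact ((memLp_finsetSum _ fun i _ => hA_memLp i j k).const_mul _).sub (memLp_const _)
  have hρ_trace : ρ.trace = 1 := by rw [trace_vecMulVec_star, hv, Complex.ofReal_one]
  have : Nonempty (Fin m) := Fin.pos_iff_nonempty.1 hm
  have hF := integral_frobeniusNormSq_average_sub_le hA_memLp
    (fun i => hrand i ρ (posSemidef_vecMulVec_self_star v) hρ_trace)
    (fun j k _ _ h => (hindep.indepFun h).comp (measurable_mul_mul_conjTranspose_apply ρ j k)
      (measurable_mul_mul_conjTranspose_apply ρ j k))
    (fun i ω => (frobeniusNormSq_conj_pure_state (hunit i ω).1 hv).le)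
  rw [Fintype.card_fin] at hF
  calc _ ≤ √(d * ∫ ω, frobeniusNormSq ((m : ℂ)⁻¹ • ∑ i, A i ω - c) ∂μ) := by
        simpa using integral_traceNorm_le_sqrt hX_memLp
    _ ≤ √(d / m) := by
        rw [div_eq_mul_inv]
        gcongr

theorem expected_trace_dist_le_sqrt (d m : ℕ) (hd : 0 < d) (hm : 0 < m)
    {Ω : Type*} [MeasurableSpace Ω] (μ : Measure Ω) [IsProbabilityMeasure μ]
    (U : Fin m → Ω → Matrix (Fin d) (Fin d) ℂ)
    (hmeas : ∀ i, Measurable (U i))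
    (hunit : ∀ i ω, (U i ω)ᴴ * U i ω = 1 ∧ U i ω * (U i ω)ᴴ = 1)
    (hindep : iIndepFun U μ)
    (hrand : ∀ i (σ : Matrix (Fin d) (Fin d) ℂ), σ.PosSemidef → σ.trace = 1 →
      ∀ j k, ∫ ω, (U i ω * σ * (U i ω)ᴴ) j k ∂μ = (((d : ℂ)⁻¹ • 1 : Matrix (Fin d) (Fin d) ℂ)) j k)
    (v : Fin d → ℂ) (hv : ∑ i, Complex.normSq (v i) = 1) :
    ∫ ω, traceNorm ((m : ℂ)⁻¹ • (∑ i, U i ω * vecMulVec v (star v) * (U i ω)ᴴ)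
          - (d : ℂ)⁻¹ • 1) ∂μ
      ≤ Real.sqrt ((d : ℝ) / m) :=
  expected_trace_dist_le_sqrt_general d m hm μ U hmeas hunit hindep hrand v hv
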